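/- arXiv:2112.01391 — 3 statements merged into one kernel-verified Lean document; each statement's English description precedes it below -/
import Mathlib

section
/- Let g(z) = ∑_{k≥0} b_k z^k be analytic in the unit disk with sup norm at most 1, and let p(z) = ∑_{k=0}^n b_k z^k be its n-th Taylor polynomial, n ≥ 2. Then there is an absolute constant C₀ such that |p(z)| ≤ C₀ for all z with |z| ≤ 1 - 2·log n / n. -/
open Complex Filter Metric ENNReal NNReal

/-- Cauchy coefficient estimate: if `∑ b_k z^k = g z` on the unit disk and `|g| ≤ 1`
there, then `|b_k| ≤ ρ⁻¹ ^ k` for each `0 < ρ < 1`. -/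
lemma abs_coeff_le_aux (g : ℂ → ℂ) (b : ℕ → ℂ)
    (hg : ∀ z : ℂ, ‖z‖ < 1 → HasSum (fun k => b k * z ^ k) (g z))
    (hb : ∀ z : ℂ, ‖z‖ < 1 → ‖g z‖ ≤ 1) :
    ∀ k, ‖b k‖ ≤ 1 := by
  set q := FormalMultilinearSeries.ofScalars ℂ b with hq
  have hqn : ∀ k, ‖q k‖ = ‖b k‖ := fun k =>
    FormalMultilinearSeries.ofScalars_norm ℂ b k
  -- `g` has power series `q` on the unit ball
  have hball : HasFPowerSeriesOnBall g q 0 1 := by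
    refine ⟨?_, one_pos, ?_⟩
    · -- radius at least 1
      refine ENNReal.le_of_forall_nnreal_lt fun r hr => ?_
      have hr1 : (r : ℝ) < 1 := by exact_mod_cast hr
      have habs : ‖((r : ℝ) : ℂ)‖ < 1 := by
        rwa [Complex.norm_real, Real.norm_eq_abs, _root_.abs_of_nonneg r.coe_nonneg]
      have hsum : Summable fun k => b k * ((r : ℝ) : ℂ) ^ k := (hg _ habs).summable
      have hsum' : Summable fun k => ‖b k * ((r : ℝ) : ℂ) ^ k‖ :=
        (summable_norm_iff.mpr hsum)
      refine q.le_radius_of_summable_norm ?_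
      refine hsum'.congr fun k => ?_
      rw [norm_mul, norm_pow, hqn, Complex.norm_real, Real.norm_eq_abs, _root_.abs_of_nonneg r.coe_nonneg]
    · intro y hy
      have hy' : ‖y‖ < 1 := by
        rw [mem_emetric_ball_zero_iff] at hy
        have h2 : ‖y‖₊ < (1:NNReal) := by rw [enorm_eq_nnnorm] at hy; exact_mod_cast hy
        have h3 : ‖y‖ < 1 := by exact_mod_cast h2
        simpa using h3
      have heq : (fun n => q n fun _ => y) = fun n => b n * y ^ n := by
        funext m
        rw [hq, FormalMultilinearSeries.ofScalars_apply_eq, smul_eq_mul]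
      rw [zero_add, heq]
      exact hg y hy'
  intro k
  -- For each ρ < 1, the Cauchy estimate gives `|b k| ≤ ρ⁻¹ ^ k`
  have key : ∀ ρ : ℝ, 0 < ρ → ρ < 1 → ‖b k‖ ≤ ρ⁻¹ ^ k := by
    intro ρ h0 h1
    set R : NNReal := Real.toNNReal ρ with hR
    have hRcoe : (R : ℝ) = ρ := Real.coe_toNNReal ρ h0.le
    have hRpos : 0 < R := by
      rw [← NNReal.coe_pos, hRcoe]; exact h0
    have hball1 : Metric.eball (0:ℂ) 1 = Metric.ball (0:ℂ) 1 := by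
      rw [show (1:ℝ≥0∞) = ((1:ℝ≥0):ℝ≥0∞) from rfl, Metric.emetric_ball_nnreal, NNReal.coe_one]
    have hdiff : DifferentiableOn ℂ g (closedBall 0 (R : ℝ)) := by
      have := hball.differentiableOn
      rw [hball1] at this
      refine this.mono fun x hx => ?_
      simp only [mem_closedBall, dist_zero_right, hRcoe] at hx
      exact Metric.mem_ball.2 (by simpa [dist_zero_right] using hx.trans_lt h1)
    have hc : HasFPowerSeriesOnBall g (cauchyPowerSeries g 0 R) 0 R :=
      hdiff.hasFPowerSeriesOnBall hRpos
    have heq : q = cauchyPowerSeries g 0 R :=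
      hball.hasFPowerSeriesAt.eq_formalMultilinearSeries hc.hasFPowerSeriesAt
    have hbound := norm_cauchyPowerSeries_le g 0 (R : ℝ) k
    have hcirc : ∀ θ : ℝ, ‖circleMap 0 R θ‖ < 1 := by
      intro θ
      rw [norm_circleMap_zero, hRcoe, _root_.abs_of_nonneg h0.le]
      exact h1
    have hint : (∫ θ : ℝ in (0)..2 * Real.pi, ‖g (circleMap 0 R θ)‖) ≤ 2 * Real.pi := by
      have hcont : ContinuousOn g (Metric.ball (0:ℂ) 1) := by
        have := hball.differentiableOn.continuousOn
        rwa [hball1] at this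
      have hgc : Continuous fun θ : ℝ => ‖g (circleMap 0 R θ)‖ := by
        refine (hcont.comp_continuous (continuous_circleMap 0 R) fun θ => ?_).norm
        simpa [mem_ball, dist_zero_right] using hcirc θ
      calc (∫ θ : ℝ in (0)..2 * Real.pi, ‖g (circleMap 0 R θ)‖)
          ≤ ∫ _ : ℝ in (0)..2 * Real.pi, (1:ℝ) := by
            refine intervalIntegral.integral_mono_on Real.two_pi_pos.le
              (hgc.intervalIntegrable _ _) (intervalIntegrable_const) fun θ _ => ?_
            exact hb _ (hcirc θ)
        _ = 2 * Real.pi := by simp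
    have h2π : (0:ℝ) < 2 * Real.pi := Real.two_pi_pos
    calc ‖b k‖ = ‖q k‖ := (hqn k).symm
      _ = ‖cauchyPowerSeries g 0 (R:ℝ) k‖ := by rw [heq]
      _ ≤ ((2 * Real.pi)⁻¹ * ∫ θ : ℝ in (0)..2 * Real.pi, ‖g (circleMap 0 R θ)‖) *
            |(R:ℝ)|⁻¹ ^ k := hbound
      _ ≤ ((2 * Real.pi)⁻¹ * (2 * Real.pi)) * ρ⁻¹ ^ k := by
          rw [hRcoe] at hint ⊢
          rw [_root_.abs_of_nonneg h0.le]
          refine mul_le_mul_of_nonneg_right (mul_le_mul_of_nonneg_left hint (by positivity)) ?_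
          positivity
      _ = ρ⁻¹ ^ k := by rw [inv_mul_cancel₀ h2π.ne']; ring
  -- let ρ → 1
  have htend : Tendsto (fun ρ : ℝ => ρ⁻¹ ^ k) (nhdsWithin 1 (Set.Iio 1)) (nhds 1) := by
    have hc1 : ContinuousWithinAt (fun ρ : ℝ => ρ⁻¹ ^ k) (Set.Iio 1) 1 :=
      ((continuousAt_inv₀ one_ne_zero).pow k).continuousWithinAt
    have h2 := hc1.tendsto
    simpa using h2
  refine ge_of_tendsto htend ?_
  filter_upwards [Ioo_mem_nhdsLT_of_mem (by norm_num : (1:ℝ) ∈ Set.Ioc (1/2) 1)] with ρ hρ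
  exact key ρ (by linarith [hρ.1]) hρ.2

/-- If `g(z) = ∑ b_k z^k` is analytic in the unit disk with `|g| ≤ 1`, `n ≥ 2`, and
`p` is the `n`-th Taylor polynomial of `g`, then `|p(z)| ≤ C₀` for an absolute
constant `C₀` whenever `|z| ≤ 1 - 2 log n / n`. -/
theorem taylor_polynomial_bound :
    ∃ C₀ : ℝ, 0 < C₀ ∧ ∀ (g : ℂ → ℂ) (b : ℕ → ℂ) (n : ℕ), 2 ≤ n →
      (∀ z : ℂ, ‖z‖ < 1 → HasSum (fun k => b k * z ^ k) (g z)) →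
      (∀ z : ℂ, ‖z‖ < 1 → ‖g z‖ ≤ 1) →
      ∀ z : ℂ, ‖z‖ ≤ 1 - 2 * Real.log n / n →
        ‖∑ k ∈ Finset.range (n + 1), b k * z ^ k‖ ≤ C₀ := by
  refine ⟨2, two_pos, fun g b n hn hg hb z hz => ?_⟩
  have hcoeff := abs_coeff_le_aux g b hg hb
  have hn0 : (0:ℝ) < n := by positivity
  have hlog : Real.log 2 ≤ Real.log n := by
    apply Real.log_le_log (by norm_num)
    exact_mod_cast hn
  have hlogpos : 0 < Real.log n := lt_of_lt_of_le (Real.log_pos (by norm_num)) hlog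
  set r : ℝ := 1 - 2 * Real.log n / n with hrdef
  have hr1 : r < 1 := by
    rw [hrdef]
    have : 0 < 2 * Real.log n / n := by positivity
    linarith
  have hr0 : 0 ≤ r := le_trans (norm_nonneg z) hz
  have hz1 : ‖z‖ < 1 := lt_of_le_of_lt hz hr1
  have hs := hg z hz1
  -- tail sum
  have htail : HasSum (fun k => b (k + (n+1)) * z ^ (k + (n+1)))
      (g z - ∑ k ∈ Finset.range (n + 1), b k * z ^ k) :=
    ((hasSum_nat_add_iff' (n+1)).mpr hs)
  -- bound the tail
  have hterm : ∀ k, ‖b (k + (n+1)) * z ^ (k + (n+1))‖ ≤ r ^ (n+1) * r ^ k := by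
    intro k
    rw [norm_mul, norm_pow]
    calc ‖b (k + (n+1))‖ * ‖z‖ ^ (k + (n+1))
        ≤ 1 * r ^ (k + (n+1)) := by
          refine mul_le_mul (hcoeff _) (pow_le_pow_left₀ (norm_nonneg z) hz _)
            (by positivity) one_pos.le
      _ = r ^ (n+1) * r ^ k := by rw [one_mul, pow_add, mul_comm]
  have hgeom : Summable fun k : ℕ => r ^ (n+1) * r ^ k :=
    (summable_geometric_of_lt_one hr0 hr1).mul_left _
  have hsumnorm : Summable fun k => ‖b (k + (n+1)) * z ^ (k + (n+1))‖ :=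
    Summable.of_nonneg_of_le (fun k => norm_nonneg _) hterm hgeom
  have htsum : ‖g z - ∑ k ∈ Finset.range (n + 1), b k * z ^ k‖ ≤ r ^ (n+1) * (1 - r)⁻¹ := by
    calc ‖g z - ∑ k ∈ Finset.range (n + 1), b k * z ^ k‖
        ≤ ∑' k, ‖b (k + (n+1)) * z ^ (k + (n+1))‖ := by
          rw [← htail.tsum_eq]
          exact norm_tsum_le_tsum_norm hsumnorm
      _ ≤ ∑' k, r ^ (n+1) * r ^ k := hsumnorm.tsum_le_tsum hterm hgeom
      _ = r ^ (n+1) * (1 - r)⁻¹ := by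
          rw [_root_.tsum_mul_left, tsum_geometric_of_lt_one hr0 hr1]
  -- `r^(n+1) ≤ 1 - r`
  have hrn : r ^ (n+1) ≤ 1 - r := by
    have hrn2 : r ^ n ≤ (↑n : ℝ)⁻¹ ^ 2 := by
      have h1 : r ≤ Real.exp (-(2 * Real.log n / n)) := by
        have := Real.add_one_le_exp (-(2 * Real.log n / n))
        linarith
      calc r ^ n ≤ Real.exp (-(2 * Real.log n / n)) ^ n := pow_le_pow_left₀ hr0 h1 n
        _ = Real.exp (-(2 * Real.log n)) := by
            rw [← Real.exp_nat_mul]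
            congr 1
            field_simp
        _ = ((n:ℝ) ^ 2)⁻¹ := by
            rw [Real.exp_neg]
            congr 1
            rw [show (2:ℝ) * Real.log n = Real.log ((n:ℝ) ^ 2) by
              rw [Real.log_pow]; push_cast; ring]
            rw [Real.exp_log (by positivity)]
        _ = (↑n : ℝ)⁻¹ ^ 2 := by rw [inv_pow]
    have hstep : ((n:ℝ)⁻¹) ^ 2 ≤ 2 * Real.log n / n := by
      rw [inv_pow, inv_eq_one_div, div_le_div_iff₀ (by positivity) hn0]
      have h2 : (2:ℝ) ≤ n := by exact_mod_cast hn
      have hl2 : (0.6931471803 : ℝ) < Real.log 2 := Real.log_two_gt_d9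
      have ha : (0.69:ℝ) ≤ Real.log n := by linarith
      have hprod : (0.69:ℝ) * 2 ≤ Real.log n * n :=
        mul_le_mul ha h2 (by norm_num) (le_trans (by norm_num) ha)
      have h1n : (1:ℝ) ≤ 2 * Real.log n * n := by nlinarith
      calc (1:ℝ) * n ≤ (2 * Real.log n * n) * n := by
            nlinarith [mul_le_mul_of_nonneg_right h1n hn0.le]
        _ = 2 * Real.log n * n ^ 2 := by ring
    calc r ^ (n+1) = r ^ n * r := by rw [pow_succ]
      _ ≤ r ^ n * 1 := by nlinarith [pow_nonneg hr0 n]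
      _ = r ^ n := mul_one _
      _ ≤ (↑n : ℝ)⁻¹ ^ 2 := hrn2
      _ ≤ 2 * Real.log n / n := hstep
      _ = 1 - r := by rw [hrdef]; ring
  have h1r : 0 < 1 - r := by linarith
  have htsum2 : ‖g z - ∑ k ∈ Finset.range (n + 1), b k * z ^ k‖ ≤ 1 := by
    refine htsum.trans ?_
    have h2 : r ^ (n+1) * (1-r)⁻¹ ≤ (1-r) * (1-r)⁻¹ :=
      mul_le_mul_of_nonneg_right hrn (by positivity)
    rwa [mul_inv_cancel₀ h1r.ne'] at h2
  have hfin : (∑ k ∈ Finset.range (n + 1), b k * z ^ k)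
      = g z - (g z - ∑ k ∈ Finset.range (n + 1), b k * z ^ k) := by ring
  calc ‖∑ k ∈ Finset.range (n + 1), b k * z ^ k‖
      = ‖g z - (g z - ∑ k ∈ Finset.range (n + 1), b k * z ^ k)‖ := by
        rw [← hfin]
    _ ≤ ‖g z‖ + ‖g z - ∑ k ∈ Finset.range (n + 1), b k * z ^ k‖ := norm_sub_le _ _
    _ ≤ 1 + 1 := add_le_add (by exact hb z hz1) htsum2
    _ = 2 := by norm_num
end

section
/- Let B be a finite Blaschke product of degree at most n. Then for every r ∈ [0,1], ∫₀^{2π} |B'(re^{it})| dt ≤ 2πn. -/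
open MeasureTheory Complex

private noncomputable def bF (a : ℂ) : ℂ → ℂ :=
  fun x => (a - x) / (1 - (starRingEnd ℂ) a * x)

private noncomputable def bD (a : ℂ) : ℂ → ℂ :=
  fun x => ((Complex.normSq a : ℂ) - 1) / (1 - (starRingEnd ℂ) a * x) ^ 2

private lemma normSq_key (a z : ℂ) :
    Complex.normSq (1 - (starRingEnd ℂ) a * z) - Complex.normSq (a - z)
      = (1 - Complex.normSq a) * (1 - Complex.normSq z) := by
  simp only [Complex.normSq_apply, Complex.sub_re, Complex.sub_im, Complex.mul_re,
    Complex.mul_im, Complex.one_re, Complex.one_im, Complex.conj_re, Complex.conj_im]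
  ring

private lemma bF_hasDerivAt (a x : ℂ) (h : 1 - (starRingEnd ℂ) a * x ≠ 0) :
    HasDerivAt (bF a) (bD a x) x := by
  have h1 : HasDerivAt (fun y : ℂ => a - y) (-1) x := (hasDerivAt_id x).const_sub a
  have h2 : HasDerivAt (fun y : ℂ => 1 - (starRingEnd ℂ) a * y) (-((starRingEnd ℂ) a)) x := by
    simpa using ((hasDerivAt_id x).const_mul ((starRingEnd ℂ) a)).const_sub 1
  have h3 := h1.div h2 h
  have hnum : (-1 : ℂ) * (1 - (starRingEnd ℂ) a * x) - (a - x) * -((starRingEnd ℂ) a)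
      = (Complex.normSq a : ℂ) - 1 := by
    have hm : (starRingEnd ℂ) a * a = (Complex.normSq a : ℂ) := by
      rw [mul_comm, Complex.mul_conj]
    linear_combination hm
  unfold bD
  rw [← hnum]
  exact h3

private lemma bF_abs_le (a x : ℂ) (ha : Complex.normSq a ≤ 1) (hx : Complex.normSq x ≤ 1) :
    ‖bF a x‖ ≤ 1 := by
  unfold bF
  rw [norm_div]
  rcases eq_or_ne (1 - (starRingEnd ℂ) a * x) 0 with h | h
  · simp [h]
  · rw [div_le_one (norm_pos_iff.mpr h)]
    have hkey := normSq_key a x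
    have h1 : Complex.normSq (a - x) ≤ Complex.normSq (1 - (starRingEnd ℂ) a * x) := by
      nlinarith [Complex.normSq_nonneg (a - x)]
    rw [Complex.norm_def, Complex.norm_def]
    exact Real.sqrt_le_sqrt h1

private lemma bD_abs (a x : ℂ) :
    ‖bD a x‖
      = ‖(Complex.normSq a : ℂ) - 1‖
        / Complex.normSq (1 - (starRingEnd ℂ) a * x) := by
  unfold bD
  rw [norm_div, norm_pow, Complex.sq_norm]

private lemma abs_normSq_sub_one (a : ℂ) (ha : ‖a‖ < 1) :
    ‖(Complex.normSq a : ℂ) - 1‖ = 1 - Complex.normSq a := by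
  have h1 : Complex.normSq a < 1 := by
    rw [Complex.normSq_eq_norm_sq]; nlinarith [norm_nonneg a]
  have : ((Complex.normSq a : ℂ) - 1) = ((Complex.normSq a - 1 : ℝ) : ℂ) := by push_cast; ring
  rw [this, Complex.norm_real, Real.norm_eq_abs, abs_of_nonpos (by linarith)]
  ring

private lemma re_div_aux (u : ℂ) :
    ((1 + u) / (1 - u)).re = (1 - Complex.normSq u) / Complex.normSq (1 - u) := by
  rw [Complex.div_re, ← add_div]
  congr 1
  simp only [Complex.normSq_apply, Complex.add_re, Complex.add_im, Complex.sub_re,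
    Complex.sub_im, Complex.one_re, Complex.one_im]
  ring

private lemma poisson_integral (w : ℂ) (hw : ‖w‖ < 1) :
    ∫ t in (0:ℝ)..(2 * Real.pi),
      (1 - Complex.normSq w) / Complex.normSq (1 - w * Complex.exp (Complex.I * t))
      = 2 * Real.pi := by
  have hne : ∀ z : ℂ, ‖z‖ ≤ 1 → 1 - w * z ≠ 0 := by
    intro z hz h
    have h1 : w * z = 1 := by linear_combination -h
    have h2 : ‖w * z‖ < 1 := by
      rw [norm_mul]
      calc ‖w‖ * ‖z‖ ≤ ‖w‖ * 1 := by
            gcongr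
        _ < 1 := by simpa using hw
    rw [h1] at h2; simp at h2
  set g : ℂ → ℂ := fun z => (1 + w * z) / (1 - w * z) with hg
  have hd : DifferentiableOn ℂ g (Metric.closedBall 0 1) := by
    intro z hz
    have hz1 : ‖z‖ ≤ 1 := by
      simpa [Complex.dist_eq] using Metric.mem_closedBall.mp hz
    exact (show DifferentiableAt ℂ g z from
      DifferentiableAt.div (by fun_prop) (by fun_prop) (hne z hz1)).differentiableWithinAt
  have h0 : (0:ℂ) ∈ Metric.ball (0:ℂ) 1 := by simp
  have hint := hd.circleIntegral_sub_inv_smul h0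
  rw [circleIntegral] at hint
  simp only [sub_zero, deriv_circleMap, circleMap, Complex.ofReal_one, one_mul, zero_add,
    smul_eq_mul] at hint
  have hcongr : ∀ θ : ℝ, Complex.exp (↑θ * I) * I * ((Complex.exp (↑θ * I))⁻¹
      * g (Complex.exp (↑θ * I))) = I * g (Complex.exp (↑θ * I)) := by
    intro θ
    have hne' := Complex.exp_ne_zero (↑θ * I)
    field_simp
  rw [intervalIntegral.integral_congr (fun θ _ => hcongr θ),
    intervalIntegral.integral_const_mul] at hint
  have hg0 : g 0 = 1 := by simp [hg]
  rw [hg0, mul_one] at hint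
  have h2 : Complex.I * (∫ θ in (0:ℝ)..(2 * Real.pi), g (Complex.exp (↑θ * I)))
      = Complex.I * (2 * (Real.pi:ℂ)) := by rw [hint]; ring
  have h3 := mul_left_cancel₀ Complex.I_ne_zero h2
  have hcont : Continuous fun θ : ℝ => g (Complex.exp (↑θ * I)) := by
    apply Continuous.div
    · fun_prop
    · fun_prop
    · intro θ
      exact hne _ (by rw [Complex.norm_exp_ofReal_mul_I])
  have hintg : IntervalIntegrable (fun θ : ℝ => g (Complex.exp (↑θ * I)))
      MeasureTheory.volume 0 (2 * Real.pi) := hcont.intervalIntegrable _ _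
  have hre := Complex.reCLM.intervalIntegral_comp_comm hintg
  simp only [Complex.reCLM_apply] at hre
  rw [h3] at hre
  have hre' : ∫ θ in (0:ℝ)..(2 * Real.pi), (g (Complex.exp (↑θ * I))).re
      = 2 * Real.pi := by
    rw [hre]; simp
  refine (intervalIntegral.integral_congr ?_).trans hre'
  intro θ _
  show (1 - Complex.normSq w) / Complex.normSq (1 - w * Complex.exp (Complex.I * θ))
      = (g (Complex.exp (↑θ * I))).re
  rw [hg]
  have hrd := re_div_aux (w * Complex.exp (↑θ * I))
  rw [hrd, Complex.normSq_mul, Complex.normSq_eq_norm_sq (Complex.exp (↑θ * I)),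
    Complex.norm_exp_ofReal_mul_I]
  rw [mul_comm Complex.I (θ:ℂ)]
  ring_nf

/-- For a finite Blaschke product `B` of degree at most `n` and any `r ∈ [0,1]`,
`∫₀^{2π} |B'(r e^{it})| dt ≤ 2πn`. -/
theorem blaschke_circle_integral (n m : ℕ) (hm : m ≤ n) (c : ℂ) (hc : ‖c‖ = 1)
    (a : Fin m → ℂ) (ha : ∀ k, ‖a k‖ < 1) (B : ℂ → ℂ)
    (hB : B = fun z => c * ∏ k, (a k - z) / (1 - (starRingEnd ℂ) (a k) * z))
    (r : ℝ) (hr : r ∈ Set.Icc (0 : ℝ) 1) :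
    ∫ t in (0 : ℝ)..(2 * Real.pi),
        ‖deriv B ((r : ℂ) * Complex.exp (Complex.I * t))‖
      ≤ 2 * Real.pi * n := by
  obtain ⟨hr0, hr1⟩ := hr
  set z : ℝ → ℂ := fun t => (r : ℂ) * Complex.exp (Complex.I * t) with hzdef
  have hzabs : ∀ t, ‖z t‖ = r := by
    intro t
    rw [hzdef]
    simp only [norm_mul, Complex.norm_real, Real.norm_eq_abs, _root_.abs_of_nonneg hr0]
    rw [mul_comm Complex.I (t : ℂ), Complex.norm_exp_ofReal_mul_I, mul_one]
  have hznormSq : ∀ t, Complex.normSq (z t) ≤ 1 := by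
    intro t
    rw [Complex.normSq_eq_norm_sq, hzabs t]
    nlinarith
  have hden : ∀ (k : Fin m) (t : ℝ), 1 - (starRingEnd ℂ) (a k) * z t ≠ 0 := by
    intro k t h
    have h1 : (starRingEnd ℂ) (a k) * z t = 1 := by linear_combination -h
    have h2 : ‖(starRingEnd ℂ) (a k) * z t‖ < 1 := by
      rw [norm_mul, Complex.norm_conj, hzabs t]
      nlinarith [norm_nonneg (a k), ha k]
    rw [h1] at h2; simp at h2
  -- derivative of B at z t
  have hB' : ∀ t, HasDerivAt B
      (c * ∑ k, (∏ j ∈ Finset.univ.erase k, bF (a j) (z t)) • bD (a k) (z t)) (z t) := by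
    intro t
    rw [hB]
    exact (HasDerivAt.fun_finsetProd fun k _ => bF_hasDerivAt (a k) (z t) (hden k t)).const_mul c
  have hderiv_eq : ∀ t, deriv B (z t)
      = c * ∑ k, (∏ j ∈ Finset.univ.erase k, bF (a j) (z t)) • bD (a k) (z t) :=
    fun t => (hB' t).deriv
  -- pointwise bound
  have hbound : ∀ t, ‖c * ∑ k, (∏ j ∈ Finset.univ.erase k, bF (a j) (z t)) • bD (a k) (z t)‖
      ≤ ∑ k, (1 - Complex.normSq (a k)) / Complex.normSq (1 - (starRingEnd ℂ) (a k) * z t) := by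
    intro t
    rw [norm_mul, hc, one_mul]
    refine le_trans (norm_sum_le _ _) (Finset.sum_le_sum fun k _ => ?_)
    rw [smul_eq_mul, norm_mul, bD_abs, abs_normSq_sub_one (a k) (ha k)]
    have hprod1 : ‖∏ j ∈ Finset.univ.erase k, bF (a j) (z t)‖ ≤ 1 := by
      rw [norm_prod]
      refine Finset.prod_le_one (fun j _ => norm_nonneg _) (fun j _ => ?_)
      refine bF_abs_le (a j) (z t) ?_ (hznormSq t)
      rw [Complex.normSq_eq_norm_sq]
      nlinarith [norm_nonneg (a j), ha j]
    have hnsq : Complex.normSq (a k) < 1 := by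
      rw [Complex.normSq_eq_norm_sq]; nlinarith [norm_nonneg (a k), ha k]
    have hpos : 0 < Complex.normSq (1 - (starRingEnd ℂ) (a k) * z t) :=
      Complex.normSq_pos.mpr (hden k t)
    calc ‖∏ j ∈ Finset.univ.erase k, bF (a j) (z t)‖
          * ((1 - Complex.normSq (a k)) / Complex.normSq (1 - (starRingEnd ℂ) (a k) * z t))
        ≤ 1 * ((1 - Complex.normSq (a k)) / Complex.normSq (1 - (starRingEnd ℂ) (a k) * z t)) :=
          mul_le_mul_of_nonneg_right hprod1 (div_nonneg (by linarith) hpos.le)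
        _ = (1 - Complex.normSq (a k)) / Complex.normSq (1 - (starRingEnd ℂ) (a k) * z t) :=
          one_mul _
  -- continuity
  have hzc : Continuous z := by
    rw [hzdef]; fun_prop
  have hdenc : ∀ k : Fin m, Continuous fun t => 1 - (starRingEnd ℂ) (a k) * z t := by
    intro k; fun_prop
  have hFc : ∀ j : Fin m, Continuous fun t => bF (a j) (z t) := by
    intro j
    unfold bF
    exact Continuous.div (by fun_prop) (hdenc j) (fun t => hden j t)
  have hDc : ∀ k : Fin m, Continuous fun t => bD (a k) (z t) := by
    intro k
    unfold bD
    exact Continuous.div continuous_const ((hdenc k).pow 2)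
      (fun t => pow_ne_zero 2 (hden k t))
  have hEc : Continuous fun t =>
      c * ∑ k, (∏ j ∈ Finset.univ.erase k, bF (a j) (z t)) • bD (a k) (z t) := by
    refine continuous_const.mul (continuous_finset_sum _ fun k _ => ?_)
    exact (continuous_finset_prod _ fun j _ => hFc j).smul (hDc k)
  have hSc : ∀ k : Fin m, Continuous fun t =>
      (1 - Complex.normSq (a k)) / Complex.normSq (1 - (starRingEnd ℂ) (a k) * z t) := by
    intro k
    exact Continuous.div continuous_const (Complex.continuous_normSq.comp (hdenc k))
      (fun t => Complex.normSq_pos.mpr (hden k t) |>.ne')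
  have hint1 : IntervalIntegrable (fun t => ‖c * ∑ k, (∏ j ∈ Finset.univ.erase k, bF (a j) (z t)) • bD (a k) (z t)‖)
      volume 0 (2 * Real.pi) := (continuous_norm.comp hEc).intervalIntegrable _ _
  have hint2 : IntervalIntegrable (fun t => ∑ k : Fin m,
      (1 - Complex.normSq (a k)) / Complex.normSq (1 - (starRingEnd ℂ) (a k) * z t))
      volume 0 (2 * Real.pi) :=
    (continuous_finset_sum _ fun k _ => hSc k).intervalIntegrable _ _
  have step1 : ∫ t in (0:ℝ)..(2 * Real.pi), ‖deriv B (z t)‖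
      = ∫ t in (0:ℝ)..(2 * Real.pi), ‖c * ∑ k, (∏ j ∈ Finset.univ.erase k, bF (a j) (z t)) • bD (a k) (z t)‖ :=
    intervalIntegral.integral_congr fun t _ => by rw [hderiv_eq t]
  have step2 : ∫ t in (0:ℝ)..(2 * Real.pi), ‖c * ∑ k, (∏ j ∈ Finset.univ.erase k, bF (a j) (z t)) • bD (a k) (z t)‖
      ≤ ∫ t in (0:ℝ)..(2 * Real.pi), ∑ k : Fin m,
        (1 - Complex.normSq (a k)) / Complex.normSq (1 - (starRingEnd ℂ) (a k) * z t) :=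
    intervalIntegral.integral_mono_on Real.two_pi_pos.le hint1 hint2 (fun t _ => hbound t)
  have step3 : ∫ t in (0:ℝ)..(2 * Real.pi), ∑ k : Fin m,
        (1 - Complex.normSq (a k)) / Complex.normSq (1 - (starRingEnd ℂ) (a k) * z t)
      = ∑ k : Fin m, ∫ t in (0:ℝ)..(2 * Real.pi),
        (1 - Complex.normSq (a k)) / Complex.normSq (1 - (starRingEnd ℂ) (a k) * z t) :=
    intervalIntegral.integral_finset_sum fun k _ => (hSc k).intervalIntegrable _ _
  have step4 : ∀ k : Fin m, ∫ t in (0:ℝ)..(2 * Real.pi),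
        (1 - Complex.normSq (a k)) / Complex.normSq (1 - (starRingEnd ℂ) (a k) * z t)
      ≤ 2 * Real.pi := by
    intro k
    set w : ℂ := (starRingEnd ℂ) (a k) * (r : ℂ) with hwdef
    have hwabs : ‖w‖ < 1 := by
      rw [hwdef, norm_mul, Complex.norm_conj, Complex.norm_real, Real.norm_eq_abs, _root_.abs_of_nonneg hr0]
      nlinarith [norm_nonneg (a k), ha k]
    have hpois := poisson_integral w hwabs
    have hrw : ∀ t : ℝ, 1 - (starRingEnd ℂ) (a k) * z t = 1 - w * Complex.exp (Complex.I * t) := by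
      intro t; rw [hzdef, hwdef]; ring
    have hwns : Complex.normSq w ≤ Complex.normSq (a k) := by
      rw [hwdef, Complex.normSq_mul, Complex.normSq_conj]
      have h1 : Complex.normSq ((r:ℂ)) ≤ 1 := by
        rw [Complex.normSq_ofReal]; nlinarith
      nlinarith [Complex.normSq_nonneg (a k)]
    calc ∫ t in (0:ℝ)..(2 * Real.pi),
          (1 - Complex.normSq (a k)) / Complex.normSq (1 - (starRingEnd ℂ) (a k) * z t)
        ≤ ∫ t in (0:ℝ)..(2 * Real.pi),
          (1 - Complex.normSq w) / Complex.normSq (1 - w * Complex.exp (Complex.I * t)) := by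
          refine intervalIntegral.integral_mono_on Real.two_pi_pos.le
            ((hSc k).intervalIntegrable _ _) ?_ (fun t _ => ?_)
          · refine (Continuous.div continuous_const ?_ fun t => ?_).intervalIntegrable _ _
            · exact Complex.continuous_normSq.comp (by fun_prop)
            · rw [← hrw t]
              exact (Complex.normSq_pos.mpr (hden k t)).ne'
          · rw [hrw t]
            have hpos : 0 < Complex.normSq (1 - w * Complex.exp (Complex.I * t)) := by
              rw [← hrw t]; exact Complex.normSq_pos.mpr (hden k t)
            gcongr
        _ = 2 * Real.pi := hpois
  have hfinal : ∑ k : Fin m, ∫ t in (0:ℝ)..(2 * Real.pi),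
        (1 - Complex.normSq (a k)) / Complex.normSq (1 - (starRingEnd ℂ) (a k) * z t)
      ≤ 2 * Real.pi * n := by
    calc (∑ k : Fin m, ∫ t in (0:ℝ)..(2 * Real.pi),
          (1 - Complex.normSq (a k)) / Complex.normSq (1 - (starRingEnd ℂ) (a k) * z t))
        ≤ ∑ _k : Fin m, 2 * Real.pi := Finset.sum_le_sum fun k _ => step4 k
      _ = m * (2 * Real.pi) := by simp [Finset.sum_const, Finset.card_univ, nsmul_eq_mul]
      _ ≤ n * (2 * Real.pi) := by
          have : (m : ℝ) ≤ n := Nat.cast_le.mpr hm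
          nlinarith [Real.pi_pos]
      _ = 2 * Real.pi * n := by ring
  calc ∫ t in (0:ℝ)..(2 * Real.pi), ‖deriv B (z t)‖
      ≤ ∑ k : Fin m, ∫ t in (0:ℝ)..(2 * Real.pi),
        (1 - Complex.normSq (a k)) / Complex.normSq (1 - (starRingEnd ℂ) (a k) * z t) := by
        rw [step1, ← step3]
        exact step2
    _ ≤ 2 * Real.pi * n := hfinal
end

section
/- Let G be a bounded simply connected domain in ℂ, and for ρ > 0 let G_ρ = {z ∈ G : dist(z, ∂G) > ρ}. Then for every rational function R of degree at most n with poles outside the closure of G, and every p > 2, (∫_{G_ρ} |R'(w)|^p dA(w))^{1/p} ≤ n^{1/p} · ρ^{1/p − 1/q} · ‖R‖_{H^∞(G)}, where 1/p + 1/q = 1 and dA is normalized area measure. -/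
open MeasureTheory

namespace RationalLpAux
open Metric Set
open scoped ENNReal NNReal

lemma det_smulRight (c : ℂ) :
    (((1 : ℂ →L[ℂ] ℂ).smulRight c).restrictScalars ℝ).det = Complex.normSq c := by
  have h : ((((1 : ℂ →L[ℂ] ℂ).smulRight c).restrictScalars ℝ : ℂ →L[ℝ] ℂ) : ℂ →ₗ[ℝ] ℂ)
      = Algebra.lmul ℝ ℂ c := by
    apply LinearMap.ext; intro w
    simp [mul_comm]
  rw [ContinuousLinearMap.det, h, ← Algebra.norm_apply, Algebra.norm_complex_apply]

lemma loc_inj {R : ℂ → ℂ} {c z : ℂ} (h : HasStrictDerivAt R c z) (hc : c ≠ 0) :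
    ∃ ε > 0, Set.InjOn R (Metric.ball z ε) := by
  have h2 := (h.hasStrictFDerivAt_equiv hc).eventually_left_inverse
  rw [Metric.eventually_nhds_iff] at h2
  obtain ⟨ε, hε, hinv⟩ := h2
  exact ⟨ε, hε, fun x hx y hy hxy => by
    rw [← hinv (mem_ball.1 hx), ← hinv (mem_ball.1 hy), hxy]⟩

/-- Key area bound with multiplicity. -/
lemma key_area (S : Set ℂ) (hSo : IsOpen S) (R g : ℂ → ℂ)
    (hg : ∀ z ∈ S, HasDerivAt R (g z) z) (hgc : ContinuousOn g S)
    (n : ℕ) (M : ℝ)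
    (hMb : ∀ z ∈ S, ‖R z‖ ≤ M)
    (hfib : ∀ y : ℂ, ∀ F : Finset ℂ, (↑F ⊆ {z ∈ S | R z = y}) → F.card ≤ n) :
    ∫⁻ z in S, ENNReal.ofReal (Complex.normSq (g z))
      ≤ (n : ℝ≥0∞) * (ENNReal.ofReal M ^ 2 * NNReal.pi) := by
  classical
  set U : Set ℂ := S ∩ g ⁻¹' {0}ᶜ with hUdef
  have hUo : IsOpen U := hgc.isOpen_inter_preimage hSo isOpen_compl_singleton
  have hUS : U ⊆ S := inter_subset_left
  have hRdiff : DifferentiableOn ℂ R S := fun z hz => (hg z hz).differentiableAt.differentiableWithinAt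
  -- reduce to integral over U
  have hred : ∫⁻ z in S, ENNReal.ofReal (Complex.normSq (g z))
      = ∫⁻ z in U, ENNReal.ofReal (Complex.normSq (g z)) := by
    have h0 := lintegral_inter_add_diff (μ := volume)
      (fun z => ENNReal.ofReal (Complex.normSq (g z))) S hUo.measurableSet
    have h1 : S ∩ U = U := inter_eq_self_of_subset_right hUS
    have h2 : ∫⁻ z in S \ U, ENNReal.ofReal (Complex.normSq (g z)) = 0 := by
      have : ∀ᵐ z ∂volume, z ∈ S \ U → ENNReal.ofReal (Complex.normSq (g z)) = (0 : ℝ≥0∞) := by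
        refine Filter.Eventually.of_forall (fun z hz => ?_)
        have : g z = 0 := by
          by_contra hne
          exact hz.2 ⟨hz.1, hne⟩
        simp [this]
      rw [setLIntegral_congr_fun_ae (hSo.measurableSet.diff hUo.measurableSet) this, lintegral_zero]
    rw [← h0, h1, h2, add_zero]
  rw [hred]
  -- case U empty or get countable cover
  -- local injectivity radii
  have hloc : ∀ z : ℂ, z ∈ U → ∃ ε > 0, Metric.ball z ε ⊆ U ∧ Set.InjOn R (Metric.ball z ε) := by
    intro z hz
    have hA : AnalyticAt ℂ R z := hRdiff.analyticAt (hSo.mem_nhds (hUS hz))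
    have hsd : HasStrictDerivAt R (g z) z := by
      have h1 := hA.hasStrictFDerivAt.hasStrictDerivAt
      have h2 : (fderiv ℂ R z) 1 = deriv R z := rfl
      rwa [h2, (hg z (hUS hz)).deriv] at h1
    obtain ⟨ε, hε, hinj⟩ := loc_inj hsd hz.2
    obtain ⟨δ, hδ, hδU⟩ := Metric.isOpen_iff.1 hUo z hz
    refine ⟨min ε δ, lt_min hε hδ, ?_, hinj.mono (Metric.ball_subset_ball (min_le_left _ _))⟩
    exact subset_trans (Metric.ball_subset_ball (min_le_right _ _)) hδU
  choose! ε hε hballU hinj using hloc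
  have hUcover : U = ⋃ z : U, Metric.ball (z : ℂ) (ε z) := by
    apply Subset.antisymm
    · intro z hz; exact mem_iUnion.2 ⟨⟨z, hz⟩, Metric.mem_ball_self (hε z hz)⟩
    · exact iUnion_subset fun z => hballU z z.2
  obtain ⟨T, hTc, hTU⟩ := TopologicalSpace.isOpen_iUnion_countable
      (fun z : U => Metric.ball (z : ℂ) (ε z)) (fun z => Metric.isOpen_ball)
  rcases T.eq_empty_or_nonempty with hTe | hTne
  · have hUe : U = ∅ := by
      rw [hUcover, ← hTU, hTe]; simp
    rw [hUe]; simp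
  obtain ⟨e, he⟩ := Set.Countable.exists_eq_range hTc hTne
  set B : ℕ → Set ℂ := fun k => Metric.ball ((e k : ℂ)) (ε (e k)) with hBdef
  have hBU : ∀ k, B k ⊆ U := fun k => hballU _ (e k).2
  have hBinj : ∀ k, Set.InjOn R (B k) := fun k => hinj _ (e k).2
  have hUB : U = ⋃ k, B k := by
    rw [hUcover, ← hTU, he]
    ext x
    simp only [mem_iUnion, exists_prop, Set.mem_range]
    constructor
    · rintro ⟨i, ⟨k, rfl⟩, hx⟩; exact ⟨k, hx⟩
    · rintro ⟨k, hx⟩; exact ⟨e k, ⟨k, rfl⟩, hx⟩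
  set D : ℕ → Set ℂ := disjointed B with hDdef
  have hDm : ∀ k, MeasurableSet (D k) :=
    MeasurableSet.disjointed (fun k => Metric.isOpen_ball.measurableSet)
  have hDd : Pairwise (Function.onFun Disjoint D) := disjoint_disjointed B
  have hDB : ∀ k, D k ⊆ B k := disjointed_subset B
  have hDS : ∀ k, D k ⊆ S := fun k => (hDB k).trans ((hBU k).trans hUS)
  have hDU : ⋃ k, D k = U := by rw [hDdef, iUnion_disjointed, ← hUB]
  rw [← hDU, lintegral_iUnion hDm hDd]
  -- change of variables on each piece
  have hpiece : ∀ k, ∫⁻ z in D k, ENNReal.ofReal (Complex.normSq (g z)) = volume (R '' D k) := by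
    intro k
    have hcv := lintegral_abs_det_fderiv_eq_addHaar_image volume (hDm k)
      (f := R) (f' := fun z => ((1 : ℂ →L[ℂ] ℂ).smulRight (g z)).restrictScalars ℝ)
      (fun z hz => (((hasDerivAt_iff_hasFDerivAt.1
        (hg z (hDS k hz))).restrictScalars ℝ)).hasFDerivWithinAt)
      ((hBinj k).mono (hDB k))
    rw [← hcv]
    apply setLIntegral_congr_fun_ae (hDm k)
    exact Filter.Eventually.of_forall fun z hz => by
      rw [det_smulRight, abs_of_nonneg (Complex.normSq_nonneg _)]
  have hmeasim : ∀ k, MeasurableSet (R '' D k) := fun k =>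
    (hDm k).image_of_continuousOn_injOn (hRdiff.continuousOn.mono (hDS k))
      ((hBinj k).mono (hDB k))
  have himsub : ∀ k, R '' D k ⊆ Metric.closedBall 0 M := by
    rintro k y ⟨z, hz, rfl⟩
    rw [Metric.mem_closedBall, dist_zero_right]
    exact hMb z (hDS k hz)
  calc ∑' k, ∫⁻ z in D k, ENNReal.ofReal (Complex.normSq (g z))
      = ∑' k, ∫⁻ y, (R '' D k).indicator (fun _ => (1 : ℝ≥0∞)) y := by
        refine tsum_congr fun k => ?_
        rw [hpiece k, lintegral_indicator (hmeasim k)]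
        simp
    _ = ∫⁻ y, ∑' k, (R '' D k).indicator (fun _ => (1 : ℝ≥0∞)) y :=
        (lintegral_tsum fun k =>
          ((measurable_const.indicator (hmeasim k)).aemeasurable)).symm
    _ ≤ ∫⁻ y, (Metric.closedBall (0 : ℂ) M).indicator (fun _ => (n : ℝ≥0∞)) y := by
        refine lintegral_mono fun y => ?_
        by_cases hy : y ∈ Metric.closedBall (0 : ℂ) M
        · rw [indicator_of_mem hy]
          rw [ENNReal.tsum_eq_iSup_sum]
          refine iSup_le fun F => ?_
          classical
          set F' := F.filter (fun k => y ∈ R '' D k) with hF'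
          have hsum : ∑ k ∈ F, (R '' D k).indicator (fun _ => (1 : ℝ≥0∞)) y
              = (F'.card : ℝ≥0∞) := by
            rw [hF']
            rw [← Finset.sum_boole]
            · refine Finset.sum_congr rfl fun k _ => ?_
              by_cases hk : y ∈ R '' D k <;> simp [hk]
          rw [hsum]
          have hwit : ∀ k ∈ F', ∃ z, z ∈ D k ∧ R z = y := by
            intro k hk
            obtain ⟨z, hz, hzy⟩ := (Finset.mem_filter.1 hk).2
            exact ⟨z, hz, hzy⟩
          choose w hw1 hw2 using hwit
          have hinj2 : Function.Injective (fun k : {x // x ∈ F'} => w k.1 k.2) := by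
            intro a b hab
            by_contra hne
            have hne' : (a : ℕ) ≠ (b : ℕ) := fun h => hne (Subtype.ext h)
            apply Set.disjoint_left.1 (hDd hne') (hw1 a.1 a.2)
            have hab' : w a.1 a.2 = w b.1 b.2 := hab
            rw [hab']
            exact hw1 b.1 b.2
          have hsub : ↑(F'.attach.image (fun k : {x // x ∈ F'} => w k.1 k.2)) ⊆ {z ∈ S | R z = y} := by
            intro z hz
            simp only [Finset.coe_image, Set.mem_image, Finset.mem_coe,
              Finset.mem_attach, true_and] at hz
            obtain ⟨k, _, rfl⟩ := hz
            exact ⟨hDS k.1 (hw1 k.1 k.2), hw2 k.1 k.2⟩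
          have hc := hfib y (F'.attach.image (fun k : {x // x ∈ F'} => w k.1 k.2)) hsub
          rw [Finset.card_image_of_injective _ hinj2, Finset.card_attach] at hc
          exact_mod_cast Nat.cast_le.2 hc
        · rw [indicator_of_notMem hy]
          have : ∀ k, (R '' D k).indicator (fun _ => (1 : ℝ≥0∞)) y = 0 := fun k =>
            indicator_of_notMem (fun hmem => hy (himsub k hmem)) _
          simp [this]
    _ = (n : ℝ≥0∞) * volume (Metric.closedBall (0 : ℂ) M) := by
        rw [lintegral_indicator measurableSet_closedBall]
        simp [mul_comm]
    _ = (n : ℝ≥0∞) * (ENNReal.ofReal M ^ 2 * NNReal.pi) := by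
        rw [Complex.volume_closedBall]

lemma trivial_case (S : Set ℂ) (hSm : MeasurableSet S) (R : ℂ → ℂ)
    (h0 : ∀ w ∈ S, deriv R w = 0) (p : ℝ) (hp : 0 < p) (C : ℝ) (hC : 0 ≤ C) :
    ((1 / Real.pi) * ∫ w in S, ‖deriv R w‖ ^ p) ^ (1 / p) ≤ C := by
  have h1 : ∫ w in S, ‖deriv R w‖ ^ p = 0 := by
    rw [setIntegral_congr_fun hSm (g := fun _ => (0 : ℝ))
      (fun w hw => by rw [h0 w hw]; simp [Real.zero_rpow hp.ne'])]
    simp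
  rw [h1, mul_zero, Real.zero_rpow (by positivity)]
  exact hC

end RationalLpAux

open RationalLpAux Metric Set in
open scoped ENNReal NNReal in
/-- Theorem 4: for a bounded simply connected domain `G`, `G_ρ = {z ∈ G : dist(z,∂G) > ρ}`,
a rational function `R` of degree at most `n` with poles outside `closure G`, and `p > 2`,
`(∫_{G_ρ} |R′|^p dA)^{1/p} ≤ n^{1/p} ρ^{1/p−1/q} ‖R‖_{H∞(G)}`. -/
theorem rational_derivative_Lp_inner (G : Set ℂ) (hGo : IsOpen G) (hGc : IsConnected G)
    (hGb : Bornology.IsBounded G) (hGsc : SimplyConnectedSpace G)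
    (ρ : ℝ) (hρ : 0 < ρ)
    (n : ℕ) (P Q : Polynomial ℂ) (hP : P.natDegree ≤ n) (hQ : Q.natDegree ≤ n)
    (hQ0 : ∀ w ∈ closure G, Q.eval w ≠ 0)
    (R : ℂ → ℂ) (hR : R = fun w => P.eval w / Q.eval w)
    (M : ℝ) (hM : ∀ w ∈ G, ‖R w‖ ≤ M)
    (p q : ℝ) (hp : 2 < p) (hq : 1 / p + 1 / q = 1) :
    ((1 / Real.pi) * ∫ w in {z ∈ G | ρ < Metric.infDist z (frontier G)},
        ‖deriv R w‖ ^ p) ^ (1 / p)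
      ≤ (n : ℝ) ^ (1 / p) * ρ ^ (1 / p - 1 / q) * M := by
  have hp0 : (0 : ℝ) < p := by linarith
  have hp0' : p ≠ 0 := hp0.ne'
  set S := {z ∈ G | ρ < Metric.infDist z (frontier G)} with hSdef
  have hSG : S ⊆ G := fun z hz => hz.1
  have hSo : IsOpen S := by
    have h : S = G ∩ (fun z => Metric.infDist z (frontier G)) ⁻¹' (Set.Ioi ρ) := rfl
    rw [h]
    exact hGo.inter (isOpen_Ioi.preimage (continuous_infDist_pt _))
  have hGne : G.Nonempty := hGc.nonempty
  have hM0 : 0 ≤ M :=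
    le_trans (norm_nonneg _) (hM _ hGne.choose_spec)
  have hRHS0 : 0 ≤ (n : ℝ) ^ (1 / p) * ρ ^ (1 / p - 1 / q) * M := by positivity
  -- derivative formula
  set g : ℂ → ℂ :=
    fun z => ((P.derivative * Q - P * Q.derivative).eval z) / (Q.eval z) ^ 2 with hgdef
  have hg : ∀ z ∈ G, HasDerivAt R (g z) z := by
    intro z hz
    have hQz : Q.eval z ≠ 0 := hQ0 z (subset_closure hz)
    have h1 := (P.hasDerivAt z).div (Q.hasDerivAt z) hQz
    rw [hR]
    refine h1.congr_deriv ?_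
    simp [hgdef]
  have hderiv_eq : ∀ z ∈ G, deriv R z = g z := fun z hz => (hg z hz).deriv
  have hgc : ContinuousOn g G := by
    apply ContinuousOn.div
    · exact (Polynomial.continuous _).continuousOn
    · exact ((Polynomial.continuous Q).pow 2).continuousOn
    · exact fun z hz => pow_ne_zero 2 (hQ0 z (subset_closure hz))
  -- closed balls inside G
  have hball : ∀ z ∈ S, Metric.closedBall z ρ ⊆ G := by
    intro z hz
    have hGne' : G ≠ Set.univ := by
      intro h
      rw [h] at hGb
      exact NormedSpace.unbounded_univ ℝ ℂ hGb
    obtain ⟨y, hyf, hyd⟩ := exists_mem_frontier_infDist_compl_eq_dist hz.1 hGne'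
    have h1 : ρ < Metric.infDist z Gᶜ := by
      rw [hyd]
      exact lt_of_lt_of_le hz.2 (Metric.infDist_le_dist_of_mem hyf)
    exact (Metric.closedBall_subset_ball h1).trans Metric.ball_infDist_compl_subset
  have hDdiff : DifferentiableOn ℂ R G :=
    fun z hz => (hg z hz).differentiableAt.differentiableWithinAt
  -- Cauchy estimate
  have hcauchy : ∀ z ∈ S, ‖g z‖ ≤ M / ρ := by
    intro z hz
    have hsub := hball z hz
    have hd : DiffContOnCl ℂ R (Metric.ball z ρ) := by
      apply DifferentiableOn.diffContOnCl
      rw [closure_ball z hρ.ne']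
      exact hDdiff.mono hsub
    have h1 := Complex.norm_deriv_le_of_forall_mem_sphere_norm_le hρ hd
      (fun w hw => hM w (hsub (Metric.sphere_subset_closedBall hw)))
    rwa [hderiv_eq z (hSG hz)] at h1
  -- degenerate cases
  by_cases hdeg : P.derivative * Q - P * Q.derivative = 0 ∨ M = 0
  · refine trivial_case S hSo.measurableSet R ?_ p hp0 _ hRHS0
    intro w hw
    rw [hderiv_eq w (hSG hw)]
    rcases hdeg with h | h
    · simp [hgdef, h]
    · have := hcauchy w hw
      rw [h, zero_div] at this
      have h2 : ‖g w‖ = 0 := le_antisymm this (norm_nonneg _)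
      exact norm_eq_zero.1 h2
  push_neg at hdeg
  obtain ⟨hD0, hM0'⟩ := hdeg
  have hMpos : 0 < M := lt_of_le_of_ne hM0 (Ne.symm hM0')
  -- fiber bound
  have hfib : ∀ y : ℂ, ∀ F : Finset ℂ, (↑F ⊆ {z ∈ S | R z = y}) → F.card ≤ n := by
    intro y F hF
    have hpoly : P - Polynomial.C y * Q ≠ 0 := by
      intro h
      apply hD0
      have hPy : P = Polynomial.C y * Q := by rwa [sub_eq_zero] at h
      rw [hPy]
      simp [Polynomial.derivative_mul]
      ring
    have hsubF : F ⊆ (P - Polynomial.C y * Q).roots.toFinset := by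
      intro z hz
      obtain ⟨hzS, hzy⟩ := hF hz
      have hQz : Q.eval z ≠ 0 := hQ0 z (subset_closure (hSG hzS))
      rw [Multiset.mem_toFinset, Polynomial.mem_roots hpoly]
      have h2 : P.eval z = y * Q.eval z := by
        rw [hR] at hzy
        exact (div_eq_iff hQz).1 hzy
      simp [Polynomial.IsRoot, h2]
    calc F.card ≤ (P - Polynomial.C y * Q).roots.toFinset.card := Finset.card_le_card hsubF
      _ ≤ Multiset.card (P - Polynomial.C y * Q).roots := Multiset.toFinset_card_le _
      _ ≤ (P - Polynomial.C y * Q).natDegree := Polynomial.card_roots' _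
      _ ≤ n := le_trans (Polynomial.natDegree_sub_le _ _)
          (max_le hP (le_trans (Polynomial.natDegree_C_mul_le _ _) hQ))
  -- apply key lemma
  have hKey := key_area S hSo R g (fun z hz => hg z (hSG hz)) (hgc.mono hSG) n M
      (fun z hz => hM z (hSG hz)) hfib
  -- lintegral chain
  set L := ∫⁻ w in S, ENNReal.ofReal (‖deriv R w‖ ^ p) with hLdef
  have hLg : L = ∫⁻ w in S, ENNReal.ofReal (‖g w‖ ^ p) :=
    setLIntegral_congr_fun_ae hSo.measurableSet
      (Filter.Eventually.of_forall fun w hw => by rw [hderiv_eq w (hSG hw)])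
  have hC2 : 0 ≤ (M / ρ) ^ (p - 2) := Real.rpow_nonneg (by positivity) _
  have hstep : ∀ w ∈ S,
      ‖g w‖ ^ p ≤ (M / ρ) ^ (p - 2) * Complex.normSq (g w) := by
    intro w hw
    have hb := hcauchy w hw
    have ha : (0 : ℝ) ≤ ‖g w‖ := norm_nonneg _
    rcases eq_or_lt_of_le ha with h0 | h0
    · rw [← h0, Real.zero_rpow hp0']
      exact mul_nonneg hC2 (Complex.normSq_nonneg _)
    · have h1 : ‖g w‖ ^ p
          = ‖g w‖ ^ (p - 2) * ‖g w‖ ^ (2 : ℝ) := by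
        rw [← Real.rpow_add h0]; ring_nf
      have h2 : ‖g w‖ ^ (2 : ℝ) = Complex.normSq (g w) := by
        rw [show (2 : ℝ) = ((2 : ℕ) : ℝ) by norm_num, Real.rpow_natCast]
        exact Complex.sq_norm _
      rw [h1, h2]
      exact mul_le_mul_of_nonneg_right
        (Real.rpow_le_rpow ha hb (by linarith)) (Complex.normSq_nonneg _)
  have hL2 : L ≤ ENNReal.ofReal ((M / ρ) ^ (p - 2))
      * ∫⁻ w in S, ENNReal.ofReal (Complex.normSq (g w)) := by
    rw [hLg, ← lintegral_const_mul' _ _ ENNReal.ofReal_ne_top]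
    apply lintegral_mono_ae
    rw [ae_restrict_iff' hSo.measurableSet]
    refine Filter.Eventually.of_forall fun w hw => ?_
    rw [← ENNReal.ofReal_mul hC2]
    exact ENNReal.ofReal_le_ofReal (hstep w hw)
  have hL3 : L ≤ ENNReal.ofReal ((M / ρ) ^ (p - 2) * ((n : ℝ) * (M ^ 2 * Real.pi))) := by
    refine hL2.trans ?_
    have h1 : (n : ℝ≥0∞) * (ENNReal.ofReal M ^ 2 * NNReal.pi)
        = ENNReal.ofReal ((n : ℝ) * (M ^ 2 * Real.pi)) := by
      rw [← ENNReal.ofReal_natCast n, ← ENNReal.ofReal_pow hM0,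
        show ((NNReal.pi : ℝ≥0∞)) = ENNReal.ofReal Real.pi by
          rw [← NNReal.coe_real_pi, ENNReal.ofReal_coe_nnreal],
        ← ENNReal.ofReal_mul (by positivity), ← ENNReal.ofReal_mul (by positivity)]
    calc ENNReal.ofReal ((M / ρ) ^ (p - 2))
          * ∫⁻ w in S, ENNReal.ofReal (Complex.normSq (g w))
        ≤ ENNReal.ofReal ((M / ρ) ^ (p - 2))
          * ((n : ℝ≥0∞) * (ENNReal.ofReal M ^ 2 * NNReal.pi)) := mul_le_mul_right hKey _
      _ = ENNReal.ofReal ((M / ρ) ^ (p - 2) * ((n : ℝ) * (M ^ 2 * Real.pi))) := by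
          rw [h1, ← ENNReal.ofReal_mul hC2]
  -- Bochner integral = toReal of lintegral
  have hInt : ∫ w in S, ‖deriv R w‖ ^ p = L.toReal := by
    rw [hLdef, integral_eq_lintegral_of_nonneg_ae]
    · exact Filter.Eventually.of_forall fun w => Real.rpow_nonneg (norm_nonneg _) _
    · have h1 : ContinuousOn (fun w => ‖g w‖ ^ p) S := by
        apply ContinuousOn.rpow_const
        · exact continuous_norm.comp_continuousOn (hgc.mono hSG)
        · exact fun x _ => Or.inr hp0.le
      refine (h1.aestronglyMeasurable hSo.measurableSet).congr ?_
      rw [Filter.EventuallyEq, ae_restrict_iff' hSo.measurableSet]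
      exact Filter.Eventually.of_forall fun w hw => by rw [hderiv_eq w (hSG hw)]
  have hIntNonneg : 0 ≤ ∫ w in S, ‖deriv R w‖ ^ p := by
    rw [hInt]; exact ENNReal.toReal_nonneg
  have hfinal : ∫ w in S, ‖deriv R w‖ ^ p
      ≤ (M / ρ) ^ (p - 2) * ((n : ℝ) * (M ^ 2 * Real.pi)) := by
    rw [hInt]
    exact ENNReal.toReal_le_of_le_ofReal (by positivity) hL3
  -- final arithmetic
  have hqe : (2 - p) * (1 / p) = 1 / p - 1 / q := by
    have h1 : 1 / q = 1 - 1 / p := by linarith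
    rw [h1, sub_mul, one_div, mul_inv_cancel₀ hp0']
    ring
  have harith : ((1 / Real.pi) * ((M / ρ) ^ (p - 2) * ((n : ℝ) * (M ^ 2 * Real.pi)))) ^ (1 / p)
      = (n : ℝ) ^ (1 / p) * ρ ^ (1 / p - 1 / q) * M := by
    have hpi : Real.pi ≠ 0 := Real.pi_ne_zero
    have hMr : (M / ρ) ^ (p - 2) = M ^ (p - 2) / ρ ^ (p - 2) := Real.div_rpow hM0 hρ.le _
    have hM2 : M ^ (p - 2) * M ^ 2 = M ^ p := by
      rw [show (M : ℝ) ^ 2 = M ^ ((2 : ℕ) : ℝ) by rw [Real.rpow_natCast],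
        ← Real.rpow_add hMpos]
      norm_num
    have hin : (1 / Real.pi) * ((M / ρ) ^ (p - 2) * ((n : ℝ) * (M ^ 2 * Real.pi)))
        = (n : ℝ) * (M ^ p * ρ ^ (2 - p)) := by
      rw [hMr]
      rw [show ρ ^ (2 - p) = (ρ ^ (p - 2))⁻¹ by
        rw [← Real.rpow_neg hρ.le]; ring_nf]
      field_simp
      rw [← hM2]; ring
    rw [hin, Real.mul_rpow (by positivity) (by positivity),
      Real.mul_rpow (by positivity) (by positivity),
      ← Real.rpow_mul hM0, ← Real.rpow_mul hρ.le, hqe,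
      mul_one_div_cancel hp0', Real.rpow_one]
    ring
  calc ((1 / Real.pi) * ∫ w in S, ‖deriv R w‖ ^ p) ^ (1 / p)
      ≤ ((1 / Real.pi) * ((M / ρ) ^ (p - 2) * ((n : ℝ) * (M ^ 2 * Real.pi)))) ^ (1 / p) := by
        apply Real.rpow_le_rpow (by positivity)
        · exact mul_le_mul_of_nonneg_left hfinal (by positivity)
        · positivity
    _ = (n : ℝ) ^ (1 / p) * ρ ^ (1 / p - 1 / q) * M := harith
end
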